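/- Let d ∈ ℂ, h1(ρ) = 2ρ/(ρ²+1), h2(ρ) = (ρ⁴ + 4ρ² ln ρ − 1)/(ρ(ρ²+1)), and let L be the operator (Lf)(ρ) = −f''(ρ) − ρ^{−1}f'(ρ) + (1 − 2h1(ρ)²)ρ^{−2}f(ρ). Then the function z¹(ρ) = (d/4)∫₀^ρ s(h1(ρ)h2(s) − h1(s)h2(ρ))h1(s) ds is well defined (the integrand is integrable on (0,ρ)), is smooth on (0,∞), solves Lz¹ = d·h1 on (0,∞), and satisfies z¹(ρ) → 0 and ∂_ρ z¹(ρ) → 0 as ρ → 0⁺. Moreover it is the unique solution of Lz = d·h1 on (0,∞) with z(ρ)/ρ → 0 as ρ → 0⁺. -/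

import Mathlib

noncomputable section
open MeasureTheory Real Set Filter
open scoped RealInnerProductSpace Topology

/-- The plane `ℝ²` with its Euclidean structure. -/
abbrev V2 : Type := EuclideanSpace ℝ (Fin 2)
/-- The space `ℝ³` with its Euclidean structure. -/
abbrev V3 : Type := EuclideanSpace ℝ (Fin 3)

/-- The point `(a, b) ∈ ℝ²`. -/
def pt2 (a b : ℝ) : V2 := WithLp.toLp 2 ![a, b]

/-- The cross product in `ℝ³`. -/
def cross (u v : V3) : V3 :=
  WithLp.toLp 2 ![u 1 * v 2 - u 2 * v 1, u 2 * v 0 - u 0 * v 2, u 0 * v 1 - u 1 * v 0]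

/-- `e^{θR}`: rotation by angle `θ` about the `x₃`-axis. -/
def rot3 (θ : ℝ) (v : V3) : V3 :=
  WithLp.toLp 2 ![Real.cos θ * v 0 - Real.sin θ * v 1, Real.sin θ * v 0 + Real.cos θ * v 1, v 2]

/-- The generator `R` of horizontal rotations, `Rv = k × v` with `k = (0,0,1)`. -/
def Rgen (v : V3) : V3 := WithLp.toLp 2 ![-(v 1), v 0, 0]

/-- Directional (partial) derivative of a map `ℝ² → ℝ³` in direction `e`. -/
def pd (e : V2) (f : V2 → V3) (x : V2) : V3 := fderiv ℝ f x e

/-- The componentwise Laplacian on `ℝ²`. -/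
def lap (f : V2 → V3) (x : V2) : V3 :=
  pd (pt2 1 0) (pd (pt2 1 0) f) x + pd (pt2 0 1) (pd (pt2 0 1) f) x

/-- Squared homogeneous Sobolev seminorm `‖f‖_{Ḣ^k}² = ∫ |∇^k f|²`. -/
def sobSq (k : ℕ) (f : V2 → V3) : ℝ := ∫ x : V2, ‖iteratedFDeriv ℝ k f x‖ ^ 2

/-- The degree one harmonic map `φ(x) = e^{θR} Q(r)`,
`Q = (h₁, 0, h₃)`, `h₁(r) = 2r/(r²+1)`, `h₃(r) = (r²-1)/(r²+1)`. -/
def phi1 (x : V2) : V3 :=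
  WithLp.toLp 2 ![2 * x 0 / (x 0 ^ 2 + x 1 ^ 2 + 1), 2 * x 1 / (x 0 ^ 2 + x 1 ^ 2 + 1),
    (x 0 ^ 2 + x 1 ^ 2 - 1) / (x 0 ^ 2 + x 1 ^ 2 + 1)]

/-- `h₁(ρ) = 2ρ/(ρ²+1)`. -/
def h1f (ρ : ℝ) : ℝ := 2 * ρ / (ρ ^ 2 + 1)

/-- `h₂(ρ) = (ρ⁴ + 4ρ² ln ρ - 1)/(ρ(ρ²+1))`. -/
def h2f (ρ : ℝ) : ℝ := (ρ ^ 4 + 4 * ρ ^ 2 * Real.log ρ - 1) / (ρ * (ρ ^ 2 + 1))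

/-- The linearized operator `L = -Δ + (1-2h₁²)/ρ²` in radial variables (real-valued). -/
def Lop (f : ℝ → ℝ) (ρ : ℝ) : ℝ :=
  -(deriv (deriv f) ρ) - ρ⁻¹ * deriv f ρ + (1 - 2 * h1f ρ ^ 2) / ρ ^ 2 * f ρ

/-- The linearized operator `L = -Δ + (1-2h₁²)/ρ²` in radial variables (complex-valued). -/
def LopC (f : ℝ → ℂ) (ρ : ℝ) : ℂ :=
  -(deriv (deriv f) ρ) - (ρ⁻¹ : ℝ) * deriv f ρ + ((1 - 2 * h1f ρ ^ 2) / ρ ^ 2 : ℝ) * f ρ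

/-- The operator `𝓛 = -Δ + y⁻² + (i/2) y ∂_y` in radial variables. -/
def Lss (f : ℝ → ℂ) (y : ℝ) : ℂ :=
  -(deriv (deriv f) y) - (y⁻¹ : ℝ) * deriv f y + (((y : ℂ) ^ 2)⁻¹) * f y
    + (Complex.I / 2) * (y : ℝ) * deriv f y

/-- The variation-of-constants solution `z¹` of `Lz = d·h₁` with zero initial data at `ρ = 0`. -/
def z1sol (d : ℂ) (ρ : ℝ) : ℂ :=
  (d / 4) * ((∫ s in (0:ℝ)..ρ, s * (h1f ρ * h2f s - h1f s * h2f ρ) * h1f s : ℝ) : ℂ)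

open scoped NNReal ENNReal

section Z1Aux

lemma const_of_hasDerivAt_zero {𝔽 : Type*} [NormedAddCommGroup 𝔽] [NormedSpace ℝ 𝔽]
    {f : ℝ → 𝔽} {s : Set ℝ} (hs : Convex ℝ s) (hf : ∀ x ∈ s, HasDerivAt f 0 x)
    {x y : ℝ} (hx : x ∈ s) (hy : y ∈ s) : f y = f x := by
  have h := hs.norm_image_sub_le_of_norm_hasDerivWithin_le (f' := fun _ => (0:𝔽)) (C := 0)
    (fun z hz => (hf z hz).hasDerivWithinAt) (by simp) hx hy
  rw [zero_mul] at h
  have := le_antisymm h (norm_nonneg _)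
  rwa [norm_eq_zero, sub_eq_zero] at this

lemma analyticAt_primitive {F G : ℝ → ℝ} {x : ℝ} {s : Set ℝ} (hs : IsOpen s) (hx : x ∈ s)
    (hG : AnalyticAt ℝ G x) (hF : ∀ y ∈ s, HasDerivAt F (G y) y) : AnalyticAt ℝ F x := by
  obtain ⟨p, r, hp⟩ := hG
  obtain ⟨r', hr'pos, hr'r⟩ := ENNReal.lt_iff_exists_nnreal_btwn.mp hp.r_pos
  obtain ⟨C, hC0, hC⟩ := p.norm_mul_pow_le_of_lt_radius (lt_of_lt_of_le hr'r hp.r_le)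
  have hr'0 : (0:ℝ) < (r' : ℝ) := by exact_mod_cast hr'pos
  obtain ⟨ε₀, hε₀, hball₀⟩ := Metric.isOpen_iff.mp hs x hx
  set ε : ℝ := min ((r':ℝ)/2) (ε₀/2) with hεdef
  have hε : 0 < ε := lt_min (by linarith) (by linarith)
  have hεr' : ε < (r':ℝ) := lt_of_le_of_lt (min_le_left _ _) (by linarith)
  have hεε₀ : ε < ε₀ := lt_of_le_of_lt (min_le_right _ _) (by linarith)
  have htsub : Metric.ball x ε ⊆ s := le_trans (Metric.ball_subset_ball hεε₀.le) hball₀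
  set t : Set ℝ := Metric.ball x ε with htdef
  have hxt : x ∈ t := Metric.mem_ball_self hε
  -- coefficient bound
  have hcoeff : ∀ n, |p.coeff n| ≤ ‖p n‖ := by
    intro n
    have h := (p n).le_opNorm (1 : Fin n → ℝ)
    simp only [Pi.one_apply, norm_one, Finset.prod_const, one_pow, mul_one] at h
    exact h
  set g : ℕ → ℝ → ℝ := fun n z => p.coeff n * (z - x)^(n+1) / ((n:ℝ)+1) with hgdef
  set g' : ℕ → ℝ → ℝ := fun n z => p.coeff n * (z - x)^n with hg'def
  set u : ℕ → ℝ := fun n => C * (ε/(r':ℝ))^n with hudef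
  have hratio0 : 0 ≤ ε/(r':ℝ) := div_nonneg hε.le hr'0.le
  have hratio1 : ε/(r':ℝ) < 1 := (div_lt_one hr'0).mpr hεr'
  have hu : Summable u := (summable_geometric_of_lt_one hratio0 hratio1).mul_left C
  have hg : ∀ n z, HasDerivAt (g n) (g' n z) z := by
    intro n z
    have h1 : HasDerivAt (fun z : ℝ => (z - x)^(n+1)) (((n:ℝ)+1) * (z-x)^n) z := by
      have := ((hasDerivAt_id z).sub_const x).pow (n+1)
      exact this.congr_deriv (by simp)
    have := (h1.const_mul (p.coeff n)).div_const ((n:ℝ)+1)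
    refine this.congr_deriv (Eq.symm ?_)
    have : ((n:ℝ)+1) ≠ 0 := by positivity
    field_simp [hg'def]
    ring
  have hbound : ∀ n y, y ∈ t → ‖g' n y‖ ≤ u n := by
    intro n y hy
    have hyx : |y - x| ≤ ε := by
      have := Metric.mem_ball.mp hy
      rw [Real.dist_eq] at this
      exact this.le
    have h1 : ‖g' n y‖ ≤ ‖p n‖ * ε^n := by
      rw [hg'def]
      simp only [norm_mul, Real.norm_eq_abs, abs_pow]
      exact mul_le_mul (hcoeff n) (pow_le_pow_left₀ (abs_nonneg _) hyx n)
        (by positivity) (norm_nonneg _)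
    refine h1.trans ?_
    have : ‖p n‖ * ε^n = (‖p n‖ * (r':ℝ)^n) * (ε/(r':ℝ))^n := by
      rw [div_pow]; field_simp
    rw [this, hudef]
    exact mul_le_mul_of_nonneg_right (hC n) (by positivity)
  have hsumG : ∀ y ∈ t, HasSum (fun n => g' n y) (G y) := by
    intro y hy
    have hyx : |y - x| < ε := by
      have := Metric.mem_ball.mp hy
      rwa [Real.dist_eq] at this
    have hmem : (y - x) ∈ Metric.eball (0:ℝ) r := by
      rw [Metric.mem_eball, edist_zero_right]
      calc (‖y - x‖₊ : ℝ≥0∞) < (r' : ℝ≥0∞) := by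
            rw [ENNReal.coe_lt_coe]
            have : ‖y - x‖ < (r':ℝ) := lt_trans (by rwa [Real.norm_eq_abs]) hεr'
            exact_mod_cast this
        _ < r := hr'r
    have h := hp.hasSum hmem
    rw [add_sub_cancel] at h
    convert h using 2 with n
    · rfl
    rw [FormalMultilinearSeries.apply_eq_pow_smul_coeff, smul_eq_mul, hg'def]
    ring
  have hgsummable : ∀ y, |y - x| < ε → Summable (fun n => g n y) := by
    intro y hy
    apply Summable.of_norm_bounded (g := fun n => (C*ε) * (ε/(r':ℝ))^n)
      (((summable_geometric_of_lt_one hratio0 hratio1).mul_left (C*ε)))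
    intro n
    have h1 : ‖g n y‖ ≤ |p.coeff n| * |y-x|^(n+1) := by
      rw [hgdef]
      simp only [norm_div, norm_mul, Real.norm_eq_abs, abs_pow]
      rw [div_le_iff₀ (by positivity : (0:ℝ) < |(n:ℝ)+1|)]
      have h2 : (1:ℝ) ≤ |(n:ℝ)+1| := by
        rw [abs_of_nonneg (by positivity)]; linarith [Nat.cast_nonneg (α := ℝ) n]
      nlinarith [abs_nonneg (p.coeff n), pow_nonneg (abs_nonneg (y-x)) (n+1),
        mul_nonneg (abs_nonneg (p.coeff n)) (pow_nonneg (abs_nonneg (y-x)) (n+1))]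
    refine h1.trans ?_
    have h3 : |p.coeff n| * |y-x|^(n+1) ≤ ‖p n‖ * ε^(n+1) :=
      mul_le_mul (hcoeff n) (pow_le_pow_left₀ (abs_nonneg _) hy.le (n+1))
        (by positivity) (norm_nonneg _)
    refine h3.trans ?_
    have : ‖p n‖ * ε^(n+1) = (‖p n‖ * (r':ℝ)^n) * ((ε/(r':ℝ))^n * ε) := by
      rw [div_pow]; field_simp; ring
    rw [this]
    calc (‖p n‖ * (r':ℝ)^n) * ((ε/(r':ℝ))^n * ε) ≤ C * ((ε/(r':ℝ))^n * ε) :=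
          mul_le_mul_of_nonneg_right (hC n) (by positivity)
      _ = (C*ε) * (ε/(r':ℝ))^n := by ring
  set Fl : ℝ → ℝ := fun z => ∑' n, g n z with hFldef
  have hFl : ∀ y ∈ t, HasDerivAt Fl (G y) y := by
    intro y hy
    have := hasDerivAt_tsum_of_isPreconnected hu Metric.isOpen_ball
      (convex_ball x ε).isPreconnected (fun n z hz => hg n z) hbound hxt
      (by
        have : (fun n => g n x) = fun n => 0 := by
          funext n; simp [hgdef]
        rw [this]; exact summable_zero) hy
    rwa [(hsumG y hy).tsum_eq] at this
  -- F - Fl constant on t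
  have hconst : ∀ y ∈ t, F y - Fl y = F x - Fl x := by
    intro y hy
    refine const_of_hasDerivAt_zero (f := fun y => F y - Fl y) (convex_ball x ε) ?_ hxt hy
    intro z hz
    have := (hF z (htsub hz)).sub (hFl z hz)
    rw [sub_self] at this; exact this
  -- Fl is analytic at x via the integrated power series
  set c : ℕ → ℝ := fun n => Nat.casesOn n 0 (fun m => p.coeff m / ((m:ℝ)+1)) with hcdef
  set q := FormalMultilinearSeries.ofScalars ℝ c with hqdef
  have hqnorm : ∀ n, ‖q n‖ = |c n| := by
    intro n; rw [hqdef, FormalMultilinearSeries.ofScalars_norm]; rfl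
  have hqrad : ENNReal.ofReal ε ≤ q.radius := by
    show (↑ε.toNNReal : ℝ≥0∞) ≤ q.radius
    apply q.le_radius_of_bound (C*ε)
    intro n
    rw [hqnorm, Real.coe_toNNReal _ hε.le]
    match n with
    | 0 => simp [hcdef]; positivity
    | (m+1) =>
      have hc1 : |c (m+1)| = |p.coeff m| / ((m:ℝ)+1) := by
        rw [hcdef]
        simp [abs_div, abs_of_nonneg (by positivity : (0:ℝ) ≤ (m:ℝ)+1)]
      rw [hc1]
      have h2 : |p.coeff m| / ((m:ℝ)+1) * ε^(m+1) ≤ |p.coeff m| * ε^(m+1) := by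
        apply mul_le_mul_of_nonneg_right _ (by positivity)
        apply div_le_self (abs_nonneg _)
        linarith [Nat.cast_nonneg (α := ℝ) m]
      refine h2.trans ?_
      have h3 : |p.coeff m| * ε^(m+1) ≤ ‖p m‖ * ε^(m+1) := by
        gcongr; exact hcoeff m
      refine h3.trans ?_
      have : ‖p m‖ * ε^(m+1) = (‖p m‖ * (r':ℝ)^m) * ((ε/(r':ℝ))^m * ε) := by
        rw [div_pow]; field_simp; ring
      rw [this]
      calc (‖p m‖ * (r':ℝ)^m) * ((ε/(r':ℝ))^m * ε) ≤ C * ((ε/(r':ℝ))^m * ε) :=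
            mul_le_mul_of_nonneg_right (hC m) (by positivity)
        _ ≤ C * (1 * ε) := by
            apply mul_le_mul_of_nonneg_left _ hC0.le
            exact mul_le_mul_of_nonneg_right (pow_le_one₀ hratio0 hratio1.le) hε.le
        _ = C * ε := by ring
  have hFPS : HasFPowerSeriesOnBall Fl q x (ENNReal.ofReal ε) := by
    refine ⟨hqrad, ENNReal.ofReal_pos.mpr hε, ?_⟩
    intro y hy
    rw [Metric.emetric_ball] at hy
    have hynorm : |y| < ε := by
      rw [mem_ball_zero_iff, Real.norm_eq_abs] at hy
      exact hy
    have hsum : Summable (fun n => g n (x + y)) := hgsummable (x+y) (by simpa using hynorm)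
    have hS : HasSum (fun n => g n (x+y)) (Fl (x+y)) := hsum.hasSum
    have hshift : HasSum (fun n => c (n+1) * y^(n+1)) (Fl (x+y)) := by
      convert hS using 2 with n
      simp only [hcdef, hgdef, add_sub_cancel_left]
      ring
    have hfull : HasSum (fun n => c n * y^n) (Fl (x+y)) := by
      have h2 := (hasSum_nat_add_iff (f := fun n => c n * y^n) 1).mp hshift
      simpa [hcdef] using h2
    convert hfull using 2 with n
    · rfl
    rw [hqdef, FormalMultilinearSeries.ofScalars_apply_eq, smul_eq_mul]
  have hFlx : AnalyticAt ℝ Fl x := ⟨q, ENNReal.ofReal ε, hFPS⟩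
  have hsum : AnalyticAt ℝ (fun y => Fl y + (F x - Fl x)) x := hFlx.add analyticAt_const
  apply hsum.congr
  filter_upwards [Metric.ball_mem_nhds x hε] with y hy
  have := hconst y hy
  linarith



namespace Z1
def du (ρ : ℝ) : ℝ := (2 - 2*ρ^2)/(ρ^2+1)^2
def ddu (ρ : ℝ) : ℝ := (4*ρ^3 - 12*ρ)/(ρ^2+1)^3
def dv (ρ : ℝ) : ℝ := (ρ^6+7*ρ^4+7*ρ^2+1+(4*ρ^2-4*ρ^4)*Real.log ρ)/(ρ^2*(ρ^2+1)^2)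
def ddv (ρ : ℝ) : ℝ :=
  ((6*ρ^5+24*ρ^3+18*ρ+(8*ρ-16*ρ^3)*Real.log ρ)*(ρ^2*(ρ^2+1)^2)
    - (ρ^6+7*ρ^4+7*ρ^2+1+(4*ρ^2-4*ρ^4)*Real.log ρ)*(6*ρ^5+8*ρ^3+2*ρ))/(ρ^2*(ρ^2+1)^2)^2

lemma sq1_pos (ρ : ℝ) : 0 < ρ^2+1 := by positivity
lemma sq1_ne (ρ : ℝ) : ρ^2+1 ≠ 0 := (sq1_pos ρ).ne'

lemma hd_u (ρ : ℝ) : HasDerivAt h1f (du ρ) ρ := by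
  have h := (((hasDerivAt_id ρ).const_mul 2).div
    (((hasDerivAt_id ρ).pow 2).add_const 1) (sq1_ne ρ))
  refine h.congr_deriv (Eq.symm ?_)
  unfold du; simp only [id_eq, Pi.pow_apply, Pi.mul_apply, Pi.sub_apply, Pi.add_apply, Pi.div_apply]; field_simp; ring

lemma hd_du (ρ : ℝ) : HasDerivAt du (ddu ρ) ρ := by
  have h := ((((hasDerivAt_id ρ).pow 2).const_mul 2).const_sub 2).div
    ((((hasDerivAt_id ρ).pow 2).add_const 1).pow 2) (pow_ne_zero 2 (sq1_ne ρ))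
  refine h.congr_deriv (Eq.symm ?_)
  unfold ddu; simp only [id_eq, Pi.pow_apply, Pi.mul_apply, Pi.sub_apply, Pi.add_apply, Pi.div_apply]; field_simp; ring

lemma hd_v {ρ : ℝ} (hρ : 0 < ρ) : HasDerivAt h2f (dv ρ) ρ := by
  have hne : ρ ≠ 0 := hρ.ne'
  have hlog : HasDerivAt Real.log ρ⁻¹ ρ := Real.hasDerivAt_log hne
  have hnum : HasDerivAt (fun ρ : ℝ => ρ ^ 4 + 4 * ρ ^ 2 * Real.log ρ - 1)
      (4*ρ^3 + (8*ρ*Real.log ρ + 4*ρ)) ρ := by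
    have h2 : HasDerivAt (fun ρ : ℝ => 4 * ρ ^ 2 * Real.log ρ)
        ((8*ρ)*Real.log ρ + (4*ρ^2)*ρ⁻¹) ρ := by
      refine ((((hasDerivAt_id ρ).pow 2).const_mul 4).mul hlog).congr_deriv (Eq.symm ?_)
      simp only [id_eq, Pi.pow_apply, Pi.mul_apply, Pi.sub_apply, Pi.add_apply, Pi.div_apply]; ring
    have h1 : HasDerivAt (fun ρ : ℝ => ρ ^ 4) (4*ρ^3) ρ := by
      exact ((hasDerivAt_id ρ).pow 4).congr_deriv (by simp)
    refine ((h1.add h2).sub_const 1).congr_deriv (Eq.symm ?_)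
    field_simp
  have hden : HasDerivAt (fun ρ : ℝ => ρ * (ρ ^ 2 + 1)) (3*ρ^2+1) ρ := by
    have := (hasDerivAt_id ρ).mul (((hasDerivAt_id ρ).pow 2).add_const 1)
    refine this.congr_deriv (Eq.symm ?_); simp only [id_eq, Pi.pow_apply, Pi.mul_apply, Pi.sub_apply, Pi.add_apply, Pi.div_apply]; ring
  have hdenne : ρ * (ρ^2+1) ≠ 0 := mul_ne_zero hne (sq1_ne ρ)
  have h := hnum.div hden hdenne
  refine h.congr_deriv (Eq.symm ?_)
  unfold dv; field_simp; ring

lemma hd_dv {ρ : ℝ} (hρ : 0 < ρ) : HasDerivAt dv (ddv ρ) ρ := by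
  have hne : ρ ≠ 0 := hρ.ne'
  have hlog : HasDerivAt Real.log ρ⁻¹ ρ := Real.hasDerivAt_log hne
  have hP : HasDerivAt (fun ρ : ℝ => ρ^6+7*ρ^4+7*ρ^2+1+(4*ρ^2-4*ρ^4)*Real.log ρ)
      (6*ρ^5+24*ρ^3+18*ρ+(8*ρ-16*ρ^3)*Real.log ρ) ρ := by
    have h1 : HasDerivAt (fun ρ : ℝ => ρ^6+7*ρ^4+7*ρ^2+1) (6*ρ^5+28*ρ^3+14*ρ) ρ := by
      have := ((((hasDerivAt_id ρ).pow 6).add (((hasDerivAt_id ρ).pow 4).const_mul 7)).add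
        (((hasDerivAt_id ρ).pow 2).const_mul 7)).add_const 1
      refine this.congr_deriv (Eq.symm ?_); simp only [id_eq, Pi.pow_apply, Pi.mul_apply, Pi.sub_apply, Pi.add_apply, Pi.div_apply]; ring
    have h2 : HasDerivAt (fun ρ : ℝ => (4*ρ^2-4*ρ^4)*Real.log ρ)
        ((8*ρ - 16*ρ^3)*Real.log ρ + (4*ρ^2-4*ρ^4)*ρ⁻¹) ρ := by
      have := ((((hasDerivAt_id ρ).pow 2).const_mul 4).sub
        (((hasDerivAt_id ρ).pow 4).const_mul 4)).mul hlog
      refine this.congr_deriv (Eq.symm ?_); simp only [id_eq, Pi.pow_apply, Pi.mul_apply, Pi.sub_apply, Pi.add_apply, Pi.div_apply]; ring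
    refine (h1.add h2).congr_deriv (Eq.symm ?_)
    field_simp; ring
  have hQ : HasDerivAt (fun ρ : ℝ => ρ^2*(ρ^2+1)^2) (6*ρ^5+8*ρ^3+2*ρ) ρ := by
    have := ((hasDerivAt_id ρ).pow 2).mul ((((hasDerivAt_id ρ).pow 2).add_const 1).pow 2)
    refine this.congr_deriv (Eq.symm ?_); simp only [id_eq, Pi.pow_apply, Pi.mul_apply, Pi.sub_apply, Pi.add_apply, Pi.div_apply]; ring
  have hQne : ρ^2*(ρ^2+1)^2 ≠ 0 := mul_ne_zero (pow_ne_zero 2 hne) (pow_ne_zero 2 (sq1_ne ρ))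
  exact hP.div hQ hQne

lemma ode_u {ρ : ℝ} (hρ : 0 < ρ) :
    -(ddu ρ) - ρ⁻¹ * du ρ + (1 - 2 * h1f ρ ^ 2) / ρ ^ 2 * h1f ρ = 0 := by
  have hne : ρ ≠ 0 := hρ.ne'
  unfold ddu du h1f
  field_simp
  ring

lemma ode_v {ρ : ℝ} (hρ : 0 < ρ) :
    -(ddv ρ) - ρ⁻¹ * dv ρ + (1 - 2 * h1f ρ ^ 2) / ρ ^ 2 * h2f ρ = 0 := by
  have hne : ρ ≠ 0 := hρ.ne'
  unfold ddv dv h1f h2f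
  field_simp
  ring

lemma wronsk {ρ : ℝ} (hρ : 0 < ρ) : ρ * (h1f ρ * dv ρ - du ρ * h2f ρ) = 4 := by
  have hne : ρ ≠ 0 := hρ.ne'
  unfold h1f dv du h2f
  field_simp
  ring

end Z1

namespace Z1
def G1 (s : ℝ) : ℝ := 2*s*(s^4+4*s^2*Real.log s-1)/(s^2+1)^2
def g2 (s : ℝ) : ℝ := s * h1f s ^ 2

lemma cont_h1f : Continuous h1f :=
  (continuous_const.mul continuous_id).div
    ((continuous_id.pow 2).add continuous_const) sq1_ne

lemma cont_g2 : Continuous g2 := continuous_id.mul (cont_h1f.pow 2)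

lemma contAt_G1 {s : ℝ} (hs : 0 < s) : ContinuousAt G1 s := by
    have hne : s ≠ 0 := (ne_of_gt hs)
    unfold G1
    exact ((continuous_const.mul continuous_id).continuousAt.mul
      ((((continuous_id.pow 4).continuousAt.add
        (((continuous_const.mul (continuous_id.pow 2)).continuousAt.mul
          (Real.continuousAt_log hne)))).sub continuousAt_const))).div
      (((continuous_id.pow 2).add continuous_const).pow 2).continuousAt
      (pow_ne_zero 2 (sq1_ne s))

lemma contOn_G1_Ioi : ContinuousOn G1 (Ioi 0) :=
  fun s hs => (contAt_G1 hs).continuousWithinAt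

lemma tendsto_G1_zero : Tendsto G1 (𝓝[>] (0:ℝ)) (𝓝 0) := by
  have t3 : Tendsto (fun s : ℝ => Real.log s * s ^ (3:ℝ)) (𝓝[>] (0:ℝ)) (𝓝 0) :=
    tendsto_log_mul_rpow_nhdsGT_zero three_pos
  have t3' : Tendsto (fun s : ℝ => s^3 * Real.log s) (𝓝[>] (0:ℝ)) (𝓝 0) := by
    apply t3.congr'
    filter_upwards [self_mem_nhdsWithin] with s (hs : 0 < s)
    rw [show (3:ℝ) = ((3:ℕ):ℝ) by norm_num, Real.rpow_natCast]
    ring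
  have tmain : Tendsto (fun s : ℝ => 2*s*(s^4-1)/(s^2+1)^2 + 8*(s^3*Real.log s)/(s^2+1)^2)
      (𝓝[>] (0:ℝ)) (𝓝 0) := by
    have c1 : Tendsto (fun s : ℝ => 2*s*(s^4-1)/(s^2+1)^2) (𝓝[>] (0:ℝ)) (𝓝 0) := by
      have : Continuous (fun s : ℝ => 2*s*(s^4-1)/(s^2+1)^2) :=
        ((continuous_const.mul continuous_id).mul ((continuous_id.pow 4).sub
          continuous_const)).div (((continuous_id.pow 2).add continuous_const).pow 2)
          (fun s => pow_ne_zero 2 (sq1_ne s))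
      have := this.continuousAt (x := (0:ℝ))
      simp only [ContinuousAt] at this
      norm_num at this
      exact this.mono_left nhdsWithin_le_nhds
    have c2 : Tendsto (fun s : ℝ => 8*(s^3*Real.log s)/(s^2+1)^2) (𝓝[>] (0:ℝ)) (𝓝 0) := by
      have cden : Tendsto (fun s : ℝ => ((s^2+1)^2)⁻¹) (𝓝[>] (0:ℝ)) (𝓝 1) := by
        have : Continuous (fun s : ℝ => ((s^2+1)^2)⁻¹) := by
          exact (((continuous_id.pow 2).add continuous_const).pow 2).inv₀
            (fun s => pow_ne_zero 2 (sq1_ne s))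
        have := this.continuousAt (x := (0:ℝ))
        simp only [ContinuousAt] at this
        norm_num at this
        exact this.mono_left nhdsWithin_le_nhds
      have := (t3'.const_mul 8).mul cden
      simp only [mul_zero, zero_mul] at this
      apply this.congr
      intro s; rw [div_eq_mul_inv]
    simpa using c1.add c2
  apply tmain.congr'
  filter_upwards [self_mem_nhdsWithin] with s (hs : 0 < s)
  unfold G1
  field_simp
  ring

lemma contOn_G1_Ici : ContinuousOn G1 (Ici 0) := by
  intro s hs
  rcases eq_or_lt_of_le (show (0:ℝ) ≤ s from hs) with h | h
  · subst h
    rw [← continuousWithinAt_Ioi_iff_Ici]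
    have : G1 0 = 0 := by unfold G1; norm_num
    rw [ContinuousWithinAt, this]
    exact tendsto_G1_zero
  · exact (contAt_G1 h).continuousWithinAt

lemma intble_G1 {ρ : ℝ} (hρ : 0 < ρ) : IntervalIntegrable G1 volume 0 ρ := by
  apply ContinuousOn.intervalIntegrable
  rw [uIcc_of_le hρ.le]
  exact contOn_G1_Ici.mono (Icc_subset_Ici_self)

def A (ρ : ℝ) : ℝ := ∫ s in (0:ℝ)..ρ, G1 s
def B (ρ : ℝ) : ℝ := ∫ s in (0:ℝ)..ρ, g2 s

lemma hd_A {ρ : ℝ} (hρ : 0 < ρ) : HasDerivAt A (G1 ρ) ρ := by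
  apply intervalIntegral.integral_hasDerivAt_right (intble_G1 hρ)
  · exact (contOn_G1_Ioi.stronglyMeasurableAtFilter isOpen_Ioi _ hρ)
  · exact (contOn_G1_Ioi ρ hρ).continuousAt (isOpen_Ioi.mem_nhds hρ)

lemma hd_B (ρ : ℝ) : HasDerivAt B (g2 ρ) ρ := by
  apply intervalIntegral.integral_hasDerivAt_right (cont_g2.intervalIntegrable _ _)
  · exact cont_g2.stronglyMeasurableAtFilter _ _
  · exact cont_g2.continuousAt

end Z1


namespace Z1

lemma integrand_eq {ρ : ℝ} (hρ : 0 < ρ) :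
    EqOn (fun s => s * (h1f ρ * h2f s - h1f s * h2f ρ) * h1f s)
      (fun s => h1f ρ * G1 s - h2f ρ * g2 s) (Icc 0 ρ) := by
  intro s hs
  rcases eq_or_lt_of_le hs.1 with h | h
  · subst h
    simp [h1f, G1, g2]
  · have hne : s ≠ 0 := h.ne'
    simp only [h1f, h2f, G1, g2]
    field_simp

lemma intble_comb {ρ : ℝ} (hρ : 0 < ρ) :
    IntervalIntegrable (fun s => h1f ρ * G1 s - h2f ρ * g2 s) volume 0 ρ :=
  ((intble_G1 hρ).const_mul _).sub ((cont_g2.intervalIntegrable _ _).const_mul _)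

lemma intble_main {ρ : ℝ} (hρ : 0 < ρ) :
    IntervalIntegrable (fun s => s * (h1f ρ * h2f s - h1f s * h2f ρ) * h1f s) volume 0 ρ := by
  apply (intble_comb hρ).congr_ae
  rw [Filter.EventuallyEq, ae_restrict_iff' measurableSet_uIoc]
  filter_upwards with s hs
  rw [uIoc_of_le hρ.le] at hs
  exact (integrand_eq hρ (Ioc_subset_Icc_self hs)).symm

def zR (ρ : ℝ) : ℝ := h1f ρ * A ρ - h2f ρ * B ρ
def dzR (ρ : ℝ) : ℝ := du ρ * A ρ - dv ρ * B ρ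
def ddzR (ρ : ℝ) : ℝ := ddu ρ * A ρ - ddv ρ * B ρ - 4 * h1f ρ

lemma z1_eq (d : ℂ) {ρ : ℝ} (hρ : 0 < ρ) : z1sol d ρ = (d/4) * ((zR ρ : ℝ) : ℂ) := by
  unfold z1sol zR A B
  congr 2
  rw [intervalIntegral.integral_congr (g := fun s => h1f ρ * G1 s - h2f ρ * g2 s)
    (by rw [uIcc_of_le hρ.le]; exact integrand_eq hρ)]
  rw [intervalIntegral.integral_sub ((intble_G1 hρ).const_mul _)
    ((cont_g2.intervalIntegrable _ _).const_mul _),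
    intervalIntegral.integral_const_mul, intervalIntegral.integral_const_mul]

lemma hd_zR {ρ : ℝ} (hρ : 0 < ρ) : HasDerivAt zR (dzR ρ) ρ := by
  have h := ((hd_u ρ).mul (hd_A hρ)).sub ((hd_v hρ).mul (hd_B ρ))
  refine h.congr_deriv (Eq.symm ?_)
  have hne : ρ ≠ 0 := hρ.ne'
  simp only [dzR, g2, G1, h1f, h2f]
  field_simp
  ring

lemma hd_dzR {ρ : ℝ} (hρ : 0 < ρ) : HasDerivAt dzR (ddzR ρ) ρ := by
  have h := ((hd_du ρ).mul (hd_A hρ)).sub ((hd_dv hρ).mul (hd_B ρ))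
  refine h.congr_deriv (Eq.symm ?_)
  have hne : ρ ≠ 0 := hρ.ne'
  simp only [ddzR, du, dv, ddu, ddv, g2, G1, h1f, h2f]
  field_simp
  ring

lemma hd_z1 (d : ℂ) {ρ : ℝ} (hρ : 0 < ρ) :
    HasDerivAt (z1sol d) ((d/4) * ((dzR ρ : ℝ) : ℂ)) ρ := by
  have hF : HasDerivAt (fun ρ => (d/4) * ((zR ρ : ℝ) : ℂ)) ((d/4) * ((dzR ρ : ℝ) : ℂ)) ρ :=
    ((hd_zR hρ).ofReal_comp).const_mul (d/4)
  apply hF.congr_of_eventuallyEq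
  filter_upwards [isOpen_Ioi.mem_nhds hρ] with x (hx : 0 < x)
  exact z1_eq d hx

lemma deriv_z1 (d : ℂ) {ρ : ℝ} (hρ : 0 < ρ) :
    deriv (z1sol d) ρ = (d/4) * ((dzR ρ : ℝ) : ℂ) := (hd_z1 d hρ).deriv

lemma hd_deriv_z1 (d : ℂ) {ρ : ℝ} (hρ : 0 < ρ) :
    HasDerivAt (deriv (z1sol d)) ((d/4) * ((ddzR ρ : ℝ) : ℂ)) ρ := by
  have hF : HasDerivAt (fun ρ => (d/4) * ((dzR ρ : ℝ) : ℂ)) ((d/4) * ((ddzR ρ : ℝ) : ℂ)) ρ :=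
    ((hd_dzR hρ).ofReal_comp).const_mul (d/4)
  apply hF.congr_of_eventuallyEq
  filter_upwards [isOpen_Ioi.mem_nhds hρ] with x (hx : 0 < x)
  exact deriv_z1 d hx

lemma key {ρ : ℝ} (hρ : 0 < ρ) :
    -(ddzR ρ) - ρ⁻¹ * dzR ρ + (1 - 2 * h1f ρ ^ 2) / ρ ^ 2 * zR ρ = 4 * h1f ρ := by
  unfold ddzR dzR zR
  linear_combination (A ρ) * ode_u hρ - (B ρ) * ode_v hρ

lemma lop_z1 (d : ℂ) {ρ : ℝ} (hρ : 0 < ρ) : LopC (z1sol d) ρ = d * (h1f ρ : ℝ) := by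
  unfold LopC
  rw [(hd_deriv_z1 d hρ).deriv, deriv_z1 d hρ, z1_eq d hρ]
  have hk := key hρ
  have : ((-(ddzR ρ) - ρ⁻¹ * dzR ρ + (1 - 2 * h1f ρ ^ 2) / ρ ^ 2 * zR ρ : ℝ) : ℂ)
      = ((4 * h1f ρ : ℝ) : ℂ) := congrArg (fun t : ℝ => (t : ℂ)) hk
  push_cast at this ⊢
  linear_combination (d/4) * this

end Z1


namespace Z1

lemma analyticAt_rlog {x : ℝ} (hx : 0 < x) : AnalyticAt ℝ Real.log x := by
  have h1 : AnalyticAt ℂ Complex.log (x:ℂ) := _root_.analyticAt_clog (by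
    rw [Complex.mem_slitPlane_iff]
    left; simpa using hx)
  have h3 : AnalyticAt ℝ (fun t : ℝ => Complex.log (t:ℂ)) x :=
    h1.restrictScalars.comp (Complex.ofRealCLM.analyticAt x)
  have h4 : AnalyticAt ℝ (fun t : ℝ => (Complex.log (t:ℂ)).re) x :=
    (Complex.reCLM.analyticAt _).comp h3
  apply h4.congr
  filter_upwards with t
  rw [Complex.log_ofReal_re]

lemma aG1 {ρ : ℝ} (hρ : 0 < ρ) : AnalyticAt ℝ G1 ρ := by
  have hid : AnalyticAt ℝ (fun s : ℝ => s) ρ := analyticAt_id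
  exact ((analyticAt_const.mul hid).mul
    (((hid.pow 4).add ((analyticAt_const.mul (hid.pow 2)).mul (analyticAt_rlog hρ))).sub
      analyticAt_const)).div (((hid.pow 2).add analyticAt_const).pow 2)
    (pow_ne_zero 2 (sq1_ne ρ))

lemma a_h1f (ρ : ℝ) : AnalyticAt ℝ h1f ρ := by
  have hid : AnalyticAt ℝ (fun s : ℝ => s) ρ := analyticAt_id
  exact (analyticAt_const.mul hid).div ((hid.pow 2).add analyticAt_const) (sq1_ne ρ)

lemma a_h2f {ρ : ℝ} (hρ : 0 < ρ) : AnalyticAt ℝ h2f ρ := by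
  have hid : AnalyticAt ℝ (fun s : ℝ => s) ρ := analyticAt_id
  exact (((hid.pow 4).add ((analyticAt_const.mul (hid.pow 2)).mul (analyticAt_rlog hρ))).sub
    analyticAt_const).div (hid.mul ((hid.pow 2).add analyticAt_const))
    (mul_ne_zero hρ.ne' (sq1_ne ρ))

lemma a_g2 (ρ : ℝ) : AnalyticAt ℝ g2 ρ := analyticAt_id.mul ((a_h1f ρ).pow 2)

lemma aA {ρ : ℝ} (hρ : 0 < ρ) : AnalyticAt ℝ A ρ :=
  analyticAt_primitive isOpen_Ioi hρ (aG1 hρ) (fun y hy => hd_A hy)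

lemma aB {ρ : ℝ} (hρ : 0 < ρ) : AnalyticAt ℝ B ρ :=
  analyticAt_primitive isOpen_Ioi hρ (a_g2 ρ) (fun y _ => hd_B y)

lemma a_zR {ρ : ℝ} (hρ : 0 < ρ) : AnalyticAt ℝ zR ρ :=
  ((a_h1f ρ).mul (aA hρ)).sub ((a_h2f hρ).mul (aB hρ))

lemma a_z1 (d : ℂ) : AnalyticOnNhd ℝ (z1sol d) (Ioi 0) := by
  intro ρ hρ
  have h1 : AnalyticAt ℝ (fun y : ℝ => (d/4) * ((zR y : ℝ) : ℂ)) ρ :=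
    analyticAt_const.mul ((Complex.ofRealCLM.analyticAt _).comp (a_zR hρ))
  apply h1.congr
  filter_upwards [isOpen_Ioi.mem_nhds hρ] with y (hy : 0 < y)
  exact (z1_eq d hy).symm

lemma cd_z1 (d : ℂ) : ContDiffOn ℝ (⊤ : ℕ∞) (z1sol d) (Ioi 0) :=
  (a_z1 d).contDiffOn (uniqueDiffOn_Ioi 0)

end Z1

namespace Z1

lemma tpowL {n : ℕ} (hn : 0 < n) :
    Tendsto (fun ρ : ℝ => ρ^n * Real.log ρ) (𝓝[>] (0:ℝ)) (𝓝 0) := by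
  have h := tendsto_log_mul_rpow_nhdsGT_zero (r := (n:ℝ)) (by exact_mod_cast hn)
  apply h.congr'
  filter_upwards [self_mem_nhdsWithin] with s (hs : 0 < s)
  rw [Real.rpow_natCast]; ring

lemma tA0 : Tendsto A (𝓝[>] (0:ℝ)) (𝓝 0) := by
  have hint : IntegrableOn G1 (uIcc (0:ℝ) 1) volume := by
    rw [uIcc_of_le zero_le_one]
    exact (contOn_G1_Ici.mono Icc_subset_Ici_self).integrableOn_Icc
  have hc := intervalIntegral.continuousOn_primitive_interval hint
  have h0 : ContinuousWithinAt A (uIcc (0:ℝ) 1) 0 := hc 0 (by simp)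
  have hA0 : A 0 = 0 := intervalIntegral.integral_same
  have := h0.tendsto
  rw [hA0] at this
  have hmono : 𝓝[>] (0:ℝ) ≤ 𝓝[uIcc (0:ℝ) 1] 0 := by
    rw [← nhdsWithin_Ioc_eq_nhdsGT (zero_lt_one (α := ℝ))]
    apply nhdsWithin_mono
    rw [uIcc_of_le zero_le_one]
    exact Ioc_subset_Icc_self
  exact this.mono_left hmono

lemma B_nonneg {ρ : ℝ} (hρ : 0 < ρ) : 0 ≤ B ρ := by
  apply intervalIntegral.integral_nonneg hρ.le
  intro s hs
  exact mul_nonneg hs.1 (sq_nonneg _)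

lemma B_le {ρ : ℝ} (hρ : 0 < ρ) : B ρ ≤ ρ^4 := by
  have h1 : B ρ ≤ ∫ s in (0:ℝ)..ρ, 4*s^3 := by
    apply intervalIntegral.integral_mono_on hρ.le (cont_g2.intervalIntegrable _ _)
      (by apply Continuous.intervalIntegrable; continuity)
    intro s hs
    unfold g2 h1f
    have h2 : (1:ℝ) ≤ (s^2+1)^2 := by nlinarith [sq_nonneg s]
    rw [div_pow]
    have h3 : s * ((2*s)^2/(s^2+1)^2) = 4*s^3/(s^2+1)^2 := by ring
    rw [h3, div_le_iff₀ (by positivity)]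
    nlinarith [pow_nonneg hs.1 3, mul_nonneg (pow_nonneg hs.1 3) (sub_nonneg.mpr h2)]
  refine h1.trans ?_
  rw [intervalIntegral.integral_const_mul, integral_pow]
  norm_num
  linarith

lemma tBdiv {k : ℕ} (hk : k < 4) : Tendsto (fun ρ => B ρ / ρ^k) (𝓝[>] (0:ℝ)) (𝓝 0) := by
  have hup : Tendsto (fun ρ : ℝ => ρ^(4-k)) (𝓝[>] (0:ℝ)) (𝓝 0) := by
    have h : Tendsto (fun ρ : ℝ => ρ^(4-k)) (𝓝 (0:ℝ)) (𝓝 ((0:ℝ)^(4-k))) :=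
      (continuous_pow (4-k)).tendsto 0
    rw [zero_pow (by omega)] at h
    exact h.mono_left nhdsWithin_le_nhds
  apply tendsto_of_tendsto_of_tendsto_of_le_of_le' tendsto_const_nhds hup
  · filter_upwards [self_mem_nhdsWithin] with ρ (hρ : 0 < ρ)
    exact div_nonneg (B_nonneg hρ) (by positivity)
  · filter_upwards [self_mem_nhdsWithin] with ρ (hρ : 0 < ρ)
    rw [div_le_iff₀ (by positivity)]
    calc B ρ ≤ ρ^4 := B_le hρ
      _ = ρ^(4-k) * ρ^k := by rw [← pow_add]; congr 1; omega

lemma tnum1 : Tendsto (fun ρ : ℝ => ρ^4+4*ρ^2*Real.log ρ-1) (𝓝[>] (0:ℝ)) (𝓝 (-1)) := by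
  have h4 : Tendsto (fun ρ : ℝ => ρ^4) (𝓝[>] (0:ℝ)) (𝓝 0) := by
    have h := (continuous_pow 4).tendsto (0:ℝ)
    rw [show (0:ℝ)^4 = 0 by norm_num] at h
    exact h.mono_left nhdsWithin_le_nhds
  have hL := (tpowL (n := 2) two_pos).const_mul 4
  have h := (h4.add hL).sub_const 1
  norm_num at h
  apply h.congr
  intro ρ; ring

lemma tnum2 : Tendsto (fun ρ : ℝ => ρ^6+7*ρ^4+7*ρ^2+1+(4*ρ^2-4*ρ^4)*Real.log ρ)
    (𝓝[>] (0:ℝ)) (𝓝 1) := by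
  have hc : Continuous (fun ρ : ℝ => ρ^6+7*ρ^4+7*ρ^2+1) := by continuity
  have hpoly : Tendsto (fun ρ : ℝ => ρ^6+7*ρ^4+7*ρ^2+1) (𝓝[>] (0:ℝ)) (𝓝 1) := by
    have h := hc.tendsto (0:ℝ)
    norm_num at h
    exact h.mono_left nhdsWithin_le_nhds
  have hL2 := (tpowL (n := 2) two_pos).const_mul 4
  have hL4 := (tpowL (n := 4) (by norm_num)).const_mul 4
  have h := hpoly.add (hL2.sub hL4)
  norm_num at h
  apply h.congr
  intro ρ; ring

lemma tden1 : Tendsto (fun ρ : ℝ => ρ^2+1) (𝓝[>] (0:ℝ)) (𝓝 1) := by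
  have hc : Continuous (fun ρ : ℝ => ρ^2+1) := by continuity
  have h := hc.tendsto (0:ℝ)
  norm_num at h
  exact h.mono_left nhdsWithin_le_nhds

lemma tden2 : Tendsto (fun ρ : ℝ => (ρ^2+1)^2) (𝓝[>] (0:ℝ)) (𝓝 1) := by
  have hc : Continuous (fun ρ : ℝ => (ρ^2+1)^2) := by continuity
  have h := hc.tendsto (0:ℝ)
  norm_num at h
  exact h.mono_left nhdsWithin_le_nhds

lemma th2B : Tendsto (fun ρ => h2f ρ * B ρ) (𝓝[>] (0:ℝ)) (𝓝 0) := by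
  have h1 := (tnum1.div tden1 one_ne_zero).mul (tBdiv (k := 1) (by norm_num))
  norm_num at h1
  apply h1.congr'
  filter_upwards [self_mem_nhdsWithin] with ρ (hρ : 0 < ρ)
  unfold h2f
  have hne : ρ ≠ 0 := hρ.ne'
  field_simp
  try ring
  try exact Or.inl trivial

lemma tdvB : Tendsto (fun ρ => dv ρ * B ρ) (𝓝[>] (0:ℝ)) (𝓝 0) := by
  have h1 := (tnum2.div tden2 one_ne_zero).mul (tBdiv (k := 2) (by norm_num))
  norm_num at h1
  apply h1.congr'
  filter_upwards [self_mem_nhdsWithin] with ρ (hρ : 0 < ρ)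
  unfold dv
  have hne : ρ ≠ 0 := hρ.ne'
  field_simp
  try ring
  try exact Or.inl trivial

lemma th10 : Tendsto h1f (𝓝[>] (0:ℝ)) (𝓝 0) := by
  have h := cont_h1f.tendsto 0
  have h0 : h1f 0 = 0 := by unfold h1f; norm_num
  rw [h0] at h
  exact h.mono_left nhdsWithin_le_nhds

lemma tzR : Tendsto zR (𝓝[>] (0:ℝ)) (𝓝 0) := by
  have h := (th10.mul tA0).sub th2B
  norm_num at h
  exact h

lemma tdu : Tendsto du (𝓝[>] (0:ℝ)) (𝓝 2) := by
  have hc : Continuous du := by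
    unfold du
    exact (continuous_const.sub (continuous_const.mul (continuous_pow 2))).div
      (((continuous_pow 2).add continuous_const).pow 2)
      (fun s => pow_ne_zero 2 (sq1_ne s))
  have h := hc.tendsto 0
  have h0 : du 0 = 2 := by unfold du; norm_num
  rw [h0] at h
  exact h.mono_left nhdsWithin_le_nhds

lemma tdzR : Tendsto dzR (𝓝[>] (0:ℝ)) (𝓝 0) := by
  have h := (tdu.mul tA0).sub tdvB
  norm_num at h
  exact h

end Z1

namespace Z1

lemma tz1 (d : ℂ) : Tendsto (z1sol d) (𝓝[>] (0:ℝ)) (𝓝 0) := by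
  have h2 : Tendsto (fun ρ => ((zR ρ : ℝ):ℂ)) (𝓝[>] (0:ℝ)) (𝓝 0) := by
    have := (Complex.continuous_ofReal.tendsto 0).comp tzR
    simpa [Function.comp_def] using this
  have h : Tendsto (fun ρ => (d/4) * ((zR ρ : ℝ):ℂ)) (𝓝[>] (0:ℝ)) (𝓝 0) := by
    have := h2.const_mul (d/4)
    simpa using this
  apply h.congr'
  filter_upwards [self_mem_nhdsWithin] with ρ (hρ : 0 < ρ)
  exact (z1_eq d hρ).symm

lemma tdz1 (d : ℂ) : Tendsto (deriv (z1sol d)) (𝓝[>] (0:ℝ)) (𝓝 0) := by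
  have h2 : Tendsto (fun ρ => ((dzR ρ : ℝ):ℂ)) (𝓝[>] (0:ℝ)) (𝓝 0) := by
    have := (Complex.continuous_ofReal.tendsto 0).comp tdzR
    simpa [Function.comp_def] using this
  have h : Tendsto (fun ρ => (d/4) * ((dzR ρ : ℝ):ℂ)) (𝓝[>] (0:ℝ)) (𝓝 0) := by
    have := h2.const_mul (d/4)
    simpa using this
  apply h.congr'
  filter_upwards [self_mem_nhdsWithin] with ρ (hρ : 0 < ρ)
  exact (deriv_z1 d hρ).symm

lemma tzRdiv : Tendsto (fun ρ => zR ρ / ρ) (𝓝[>] (0:ℝ)) (𝓝 0) := by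
  have ha : Tendsto (fun ρ : ℝ => 2/(ρ^2+1) * A ρ) (𝓝[>] (0:ℝ)) (𝓝 0) := by
    have := (tendsto_const_nhds (x := (2:ℝ)).div tden1 one_ne_zero).mul tA0
    norm_num at this
    exact this
  have hb : Tendsto (fun ρ : ℝ => (ρ^4+4*ρ^2*Real.log ρ-1)/(ρ^2+1) * (B ρ/ρ^2))
      (𝓝[>] (0:ℝ)) (𝓝 0) := by
    have := (tnum1.div tden1 one_ne_zero).mul (tBdiv (k := 2) (by norm_num))
    norm_num at this
    exact this
  have h := ha.sub hb
  norm_num at h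
  apply h.congr'
  filter_upwards [self_mem_nhdsWithin] with ρ (hρ : 0 < ρ)
  have hne : ρ ≠ 0 := hρ.ne'
  unfold zR h1f h2f
  field_simp
  try ring
  try exact Or.inl trivial

lemma tz1div (d : ℂ) : Tendsto (fun ρ => z1sol d ρ / (ρ:ℂ)) (𝓝[>] (0:ℝ)) (𝓝 0) := by
  have h2 : Tendsto (fun ρ => ((zR ρ / ρ : ℝ):ℂ)) (𝓝[>] (0:ℝ)) (𝓝 0) := by
    have := (Complex.continuous_ofReal.tendsto 0).comp tzRdiv
    simp only [Function.comp_def, Complex.ofReal_zero] at this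
    exact this
  have h : Tendsto (fun ρ => (d/4) * ((zR ρ / ρ : ℝ):ℂ)) (𝓝[>] (0:ℝ)) (𝓝 0) := by
    have := h2.const_mul (d/4)
    simpa using this
  apply h.congr'
  filter_upwards [self_mem_nhdsWithin] with ρ (hρ : 0 < ρ)
  rw [z1_eq d hρ]
  push_cast
  rw [mul_div_assoc]

lemma const_on_Ioi {f : ℝ → ℂ} (hf : ∀ ρ : ℝ, 0 < ρ → HasDerivAt f 0 ρ)
    {x y : ℝ} (hx : 0 < x) (hy : 0 < y) : f y = f x :=
  const_of_hasDerivAt_zero (convex_Ioi 0) (fun z hz => hf z hz) hx hy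

lemma rep {w w' w'' : ℝ → ℂ}
    (hw : ∀ ρ : ℝ, 0 < ρ → HasDerivAt w (w' ρ) ρ)
    (hw' : ∀ ρ : ℝ, 0 < ρ → HasDerivAt w' (w'' ρ) ρ)
    (hode : ∀ ρ : ℝ, 0 < ρ →
      -(w'' ρ) - ((ρ⁻¹:ℝ):ℂ)*w' ρ + (((1 - 2*h1f ρ^2)/ρ^2 : ℝ):ℂ)*w ρ = 0) :
    ∃ a b : ℂ, ∀ ρ : ℝ, 0 < ρ → w ρ = a*((h1f ρ : ℝ):ℂ) + b*((h2f ρ : ℝ):ℂ) := by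
  set aF : ℝ → ℂ := fun ρ => ((ρ:ℂ)/4) * (((dv ρ : ℝ):ℂ)*w ρ - ((h2f ρ:ℝ):ℂ)*w' ρ) with haFd
  set bF : ℝ → ℂ := fun ρ => ((ρ:ℂ)/4) * (((h1f ρ:ℝ):ℂ)*w' ρ - ((du ρ:ℝ):ℂ)*w ρ) with hbFd
  have hρC : ∀ ρ:ℝ, HasDerivAt (fun t : ℝ => ((t:ℝ):ℂ)/4) ((1:ℂ)/4) ρ := by
    intro ρ
    have := ((hasDerivAt_id ρ).ofReal_comp).div_const (4:ℂ)
    simpa using this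
  have haF' : ∀ ρ:ℝ, 0 < ρ → HasDerivAt aF 0 ρ := by
    intro ρ hρ
    have h := (hρC ρ).mul ((((hd_dv hρ).ofReal_comp).mul (hw ρ hρ)).sub
      (((hd_v hρ).ofReal_comp).mul (hw' ρ hρ)))
    refine h.congr_deriv (Eq.symm ?_)
    have hw2 : w'' ρ = (((1-2*h1f ρ^2)/ρ^2 : ℝ):ℂ)*w ρ - ((ρ⁻¹:ℝ):ℂ)*w' ρ := by
      linear_combination -(hode ρ hρ)
    have hvr : ddv ρ = -(ρ⁻¹*dv ρ) + (1-2*h1f ρ^2)/ρ^2*h2f ρ := by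
      linear_combination -(ode_v hρ)
    have hv2 : ((ddv ρ : ℝ):ℂ) = -(((ρ⁻¹:ℝ):ℂ)*((dv ρ:ℝ):ℂ))
        + (((1-2*h1f ρ^2)/ρ^2 : ℝ):ℂ)*((h2f ρ:ℝ):ℂ) := by
      exact_mod_cast congrArg (fun t:ℝ => (t:ℂ)) hvr
    rw [hw2, hv2]
    have hne : (ρ:ℂ) ≠ 0 := Complex.ofReal_ne_zero.mpr hρ.ne'
    have h66 : ((ρ:ℂ))^6*((ρ:ℂ))⁻¹^6 = 1 := by
      rw [← mul_pow, mul_inv_cancel₀ hne, one_pow]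
    push_cast [Pi.mul_apply, Pi.sub_apply]
    field_simp
    ring
  have hbF' : ∀ ρ:ℝ, 0 < ρ → HasDerivAt bF 0 ρ := by
    intro ρ hρ
    have h := (hρC ρ).mul ((((hd_u ρ).ofReal_comp).mul (hw' ρ hρ)).sub
      (((hd_du ρ).ofReal_comp).mul (hw ρ hρ)))
    refine h.congr_deriv (Eq.symm ?_)
    have hw2 : w'' ρ = (((1-2*h1f ρ^2)/ρ^2 : ℝ):ℂ)*w ρ - ((ρ⁻¹:ℝ):ℂ)*w' ρ := by
      linear_combination -(hode ρ hρ)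
    have hur : ddu ρ = -(ρ⁻¹*du ρ) + (1-2*h1f ρ^2)/ρ^2*h1f ρ := by
      linear_combination -(ode_u hρ)
    have hu2 : ((ddu ρ : ℝ):ℂ) = -(((ρ⁻¹:ℝ):ℂ)*((du ρ:ℝ):ℂ))
        + (((1-2*h1f ρ^2)/ρ^2 : ℝ):ℂ)*((h1f ρ:ℝ):ℂ) := by
      exact_mod_cast congrArg (fun t:ℝ => (t:ℂ)) hur
    rw [hw2, hu2]
    have hne : (ρ:ℂ) ≠ 0 := Complex.ofReal_ne_zero.mpr hρ.ne'
    have h66 : ((ρ:ℂ))^6*((ρ:ℂ))⁻¹^6 = 1 := by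
      rw [← mul_pow, mul_inv_cancel₀ hne, one_pow]
    push_cast [Pi.mul_apply, Pi.sub_apply]
    field_simp
    ring
  refine ⟨aF 1, bF 1, fun ρ hρ => ?_⟩
  have ha := const_on_Ioi haF' one_pos hρ
  have hb := const_on_Ioi hbF' one_pos hρ
  rw [← ha, ← hb]
  have hWC : (ρ:ℂ)*(((h1f ρ:ℝ):ℂ)*((dv ρ:ℝ):ℂ) - ((du ρ:ℝ):ℂ)*((h2f ρ:ℝ):ℂ)) = 4 := by
    exact_mod_cast congrArg (fun t:ℝ => (t:ℂ)) (wronsk hρ)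
  simp only [haFd, hbFd]
  linear_combination (-(w ρ)/4) * hWC

end Z1


end Z1Aux

open Z1 in
/-- `z¹` is well defined, smooth on `(0,∞)`, solves `Lz¹ = d h₁`, vanishes together
with its derivative at `0⁺`, and is the unique solution of `Lz = d h₁` with `z(ρ)/ρ → 0`. -/
theorem z1sol_properties (d : ℂ) :
    (∀ ρ : ℝ, 0 < ρ →
      IntervalIntegrable (fun s => s * (h1f ρ * h2f s - h1f s * h2f ρ) * h1f s) volume 0 ρ) ∧
    ContDiffOn ℝ (⊤ : ℕ∞) (z1sol d) (Ioi 0) ∧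
    (∀ ρ : ℝ, 0 < ρ → LopC (z1sol d) ρ = d * (h1f ρ : ℝ)) ∧
    Tendsto (z1sol d) (𝓝[>] (0:ℝ)) (𝓝 0) ∧
    Tendsto (deriv (z1sol d)) (𝓝[>] (0:ℝ)) (𝓝 0) ∧
    (∀ z : ℝ → ℂ, ContDiffOn ℝ (⊤ : ℕ∞) z (Ioi 0) → (∀ ρ : ℝ, 0 < ρ → LopC z ρ = d * (h1f ρ : ℝ)) →
      Tendsto (fun ρ => z ρ / (ρ : ℝ)) (𝓝[>] (0:ℝ)) (𝓝 0) → EqOn z (z1sol d) (Ioi 0)) := by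
  refine ⟨fun ρ hρ => intble_main hρ, cd_z1 d, fun ρ hρ => lop_z1 d hρ, tz1 d, tdz1 d, ?_⟩
  intro z hz hLz hzdiv
  -- derivatives of z
  have hzd : ∀ ρ:ℝ, 0 < ρ → HasDerivAt z (deriv z ρ) ρ := by
    intro ρ hρ
    exact ((hz.contDiffAt (isOpen_Ioi.mem_nhds hρ)).differentiableAt (by simp)).hasDerivAt
  have hdz1cd : ContDiffOn ℝ 1 (deriv z) (Ioi 0) :=
    hz.deriv_of_isOpen isOpen_Ioi (by exact WithTop.coe_le_coe.mpr le_top)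
  have hzdd : ∀ ρ:ℝ, 0 < ρ → HasDerivAt (deriv z) (deriv (deriv z) ρ) ρ := by
    intro ρ hρ
    exact ((hdz1cd.contDiffAt (isOpen_Ioi.mem_nhds hρ)).differentiableAt one_ne_zero).hasDerivAt
  -- the difference w
  set w : ℝ → ℂ := fun ρ => z ρ - z1sol d ρ with hwdef
  set w' : ℝ → ℂ := fun ρ => deriv z ρ - (d/4)*((dzR ρ:ℝ):ℂ) with hw'def
  set w'' : ℝ → ℂ := fun ρ => deriv (deriv z) ρ - (d/4)*((ddzR ρ:ℝ):ℂ) with hw''def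
  have hw : ∀ ρ:ℝ, 0 < ρ → HasDerivAt w (w' ρ) ρ :=
    fun ρ hρ => (hzd ρ hρ).sub (hd_z1 d hρ)
  have hw' : ∀ ρ:ℝ, 0 < ρ → HasDerivAt w' (w'' ρ) ρ := by
    intro ρ hρ
    have hF : HasDerivAt (fun ρ:ℝ => (d/4)*((dzR ρ:ℝ):ℂ)) ((d/4)*((ddzR ρ:ℝ):ℂ)) ρ :=
      ((hd_dzR hρ).ofReal_comp).const_mul (d/4)
    exact (hzdd ρ hρ).sub hF
  have hode : ∀ ρ:ℝ, 0 < ρ →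
      -(w'' ρ) - ((ρ⁻¹:ℝ):ℂ)*w' ρ + (((1 - 2*h1f ρ^2)/ρ^2 : ℝ):ℂ)*w ρ = 0 := by
    intro ρ hρ
    have e1 := hLz ρ hρ
    have e2 := lop_z1 d hρ
    simp only [LopC] at e1 e2
    rw [deriv_z1 d hρ, (hd_deriv_z1 d hρ).deriv, z1_eq d hρ] at e2
    simp only [hwdef, hw'def, hw''def]
    rw [z1_eq d hρ]
    linear_combination e1 - e2
  obtain ⟨a, b, hab⟩ := rep hw hw' hode
  -- limit of w/ρ
  have hwlim : Tendsto (fun ρ => w ρ / (ρ:ℂ)) (𝓝[>] (0:ℝ)) (𝓝 0) := by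
    have h := hzdiv.sub (tz1div d)
    rw [sub_zero] at h
    apply h.congr
    intro ρ
    rw [hwdef]
    push_cast
    rw [sub_div]
  -- limit of h1f/ρ
  have hu2 : Tendsto (fun ρ:ℝ => ((h1f ρ:ℝ):ℂ)/(ρ:ℂ)) (𝓝[>] (0:ℝ)) (𝓝 2) := by
    have hr : Tendsto (fun ρ:ℝ => h1f ρ/ρ) (𝓝[>] (0:ℝ)) (𝓝 2) := by
      have h1 := (tendsto_const_nhds (x := (2:ℝ))).div tden1 one_ne_zero
      norm_num at h1
      apply h1.congr'
      filter_upwards [self_mem_nhdsWithin] with ρ (hρ : 0 < ρ)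
      unfold h1f
      have hne : ρ ≠ 0 := hρ.ne'
      rw [Pi.div_apply]
      field_simp
      try ring
      try exact Or.inl trivial
    have := (Complex.continuous_ofReal.tendsto 2).comp hr
    simp only [Function.comp_def, Complex.ofReal_div] at this
    exact_mod_cast this
  have hwab : (fun ρ => w ρ / (ρ:ℂ)) =ᶠ[𝓝[>] (0:ℝ)]
      (fun ρ => a*(((h1f ρ:ℝ):ℂ)/(ρ:ℂ)) + b*(((h2f ρ:ℝ):ℂ)/(ρ:ℂ))) := by
    filter_upwards [self_mem_nhdsWithin] with ρ (hρ : 0 < ρ)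
    rw [hab ρ hρ]
    ring
  have hbv : Tendsto (fun ρ => b*(((h2f ρ:ℝ):ℂ)/(ρ:ℂ))) (𝓝[>] (0:ℝ)) (𝓝 (0 - a*2)) := by
    have h1 : Tendsto (fun ρ => a*(((h1f ρ:ℝ):ℂ)/(ρ:ℂ)) + b*(((h2f ρ:ℝ):ℂ)/(ρ:ℂ)))
        (𝓝[>] (0:ℝ)) (𝓝 0) := hwlim.congr' hwab
    have := h1.sub (hu2.const_mul a)
    apply this.congr
    intro ρ; ring
  have hb0 : b = 0 := by
    by_contra hbne
    have hvlim : Tendsto (fun ρ:ℝ => ((h2f ρ:ℝ):ℂ)/(ρ:ℂ)) (𝓝[>] (0:ℝ)) (𝓝 ((0-a*2)/b)) := by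
      have h := hbv.const_mul b⁻¹
      have heq : (fun ρ:ℝ => b⁻¹*(b*(((h2f ρ:ℝ):ℂ)/(ρ:ℂ)))) =
          fun ρ:ℝ => ((h2f ρ:ℝ):ℂ)/(ρ:ℂ) := by
        funext ρ; field_simp
      rw [heq] at h
      have : b⁻¹*(0-a*2) = (0-a*2)/b := by field_simp; try ring
      rwa [this] at h
    have habs : Tendsto (fun ρ:ℝ => |h2f ρ/ρ|) (𝓝[>] (0:ℝ)) (𝓝 ‖(0-a*2)/b‖) := by
      have h := (continuous_norm.tendsto _).comp hvlim
      apply h.congr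
      intro ρ
      simp only [Function.comp_def]
      rw [← Complex.ofReal_div, Complex.norm_real, Real.norm_eq_abs]
    have hatTop : Tendsto (fun ρ:ℝ => |h2f ρ/ρ|) (𝓝[>] (0:ℝ)) atTop := by
      have hden : Tendsto (fun ρ:ℝ => (ρ^2*(ρ^2+1))⁻¹) (𝓝[>] (0:ℝ)) atTop := by
        apply Filter.Tendsto.inv_tendsto_nhdsGT_zero
        rw [tendsto_nhdsWithin_iff]
        constructor
        · have hc : Continuous (fun ρ:ℝ => ρ^2*(ρ^2+1)) := by continuity
          have h := hc.tendsto 0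
          norm_num at h
          exact h.mono_left nhdsWithin_le_nhds
        · filter_upwards [self_mem_nhdsWithin] with ρ (hρ : 0 < ρ)
          exact mul_pos (by positivity) (sq1_pos ρ)
      have hmul := Filter.Tendsto.neg_mul_atTop (by norm_num : (-1:ℝ) < 0) tnum1 hden
      have hdiv : Tendsto (fun ρ:ℝ => h2f ρ/ρ) (𝓝[>] (0:ℝ)) atBot := by
        apply hmul.congr'
        filter_upwards [self_mem_nhdsWithin] with ρ (hρ : 0 < ρ)
        unfold h2f
        rw [← div_eq_mul_inv, div_div]
        congr 1
        ring
      exact tendsto_abs_atBot_atTop.comp hdiv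
    exact not_tendsto_atTop_of_tendsto_nhds habs hatTop
  have ha0 : a = 0 := by
    have h1 : Tendsto (fun ρ => a*(((h1f ρ:ℝ):ℂ)/(ρ:ℂ)) + b*(((h2f ρ:ℝ):ℂ)/(ρ:ℂ)))
        (𝓝[>] (0:ℝ)) (𝓝 0) := hwlim.congr' hwab
    have h2 : Tendsto (fun ρ => a*(((h1f ρ:ℝ):ℂ)/(ρ:ℂ)) + b*(((h2f ρ:ℝ):ℂ)/(ρ:ℂ)))
        (𝓝[>] (0:ℝ)) (𝓝 (a*2)) := by
      have h3 := (hu2.const_mul a)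
      apply h3.congr'
      filter_upwards with ρ
      rw [hb0]
      ring
    have := tendsto_nhds_unique h1 h2
    have h4 : a*2 = 0 := this.symm
    rcases mul_eq_zero.mp h4 with h | h
    · exact h
    · norm_num at h
  intro ρ hρ
  have h := hab ρ hρ
  rw [ha0, hb0] at h
  simp only [hwdef] at h
  norm_num at h
  exact sub_eq_zero.mp h
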